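/- arXiv:1502.07042 — 3 statements merged into one kernel-verified Lean document; each statement's English description precedes it below -/
import Mathlib

section
/- (Theorem 3.1) Under the Gaussian elliptical model, the covariance matrix of the multivariate rank X̃ = D̃(X) S(X − μ) equals Γ Λ_{D,S} Γᵀ, where Λ_{D,S} is the diagonal matrix with diagonal entries λ_{D,S,i} = E[ g(‖z‖)² λᵢ zᵢ² / (Σ_{j=1}^p λⱼ zⱼ²) ]; that is, E[ D̃(X)² S(X−μ) S(X−μ)ᵀ ] = Γ Λ_{D,S} Γᵀ as p×p matrices (entrywise integrals with respect to ν). -/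
/-!
Write `S` for the spatial sign and `D = diag(√λ)`. Since `Γ` is orthogonal, `S(Γ D z) = Γ S(D z)`,
so the matrix of integrals is `Γ M Γᵀ` with `M_kl = E[g(‖z‖)² S(Dz)_k S(Dz)_l]`. Flipping the sign
of the coordinate `z_k` preserves the standard Gaussian law and `‖z‖`, and changes the sign of
`S(Dz)_k` only, so `M_kl = 0` for `k ≠ l`; on the diagonal `S(Dz)_k² = λ_k z_k² / ∑ⱼ λⱼ zⱼ²`.
-/

open MeasureTheory ProbabilityTheory Matrix Filter

/-- Euclidean norm on `Fin p → ℝ`. -/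
noncomputable def euclNorm {p : ℕ} (x : Fin p → ℝ) : ℝ := Real.sqrt (∑ i, x i ^ 2)

/-- Spatial sign: `S(x) = x/‖x‖` for `x ≠ 0`, and `S(0) = 0`. -/
noncomputable def signVec {p : ℕ} (x : Fin p → ℝ) : Fin p → ℝ :=
  if x = 0 then 0 else (euclNorm x)⁻¹ • x

section SpatialSign

variable {m p : ℕ}

theorem continuous_euclNorm : Continuous (euclNorm : (Fin p → ℝ) → ℝ) := by
  unfold euclNorm
  fun_prop

theorem signVec_eq_inv_smul (x : Fin p → ℝ) : signVec x = (euclNorm x)⁻¹ • x := by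
  unfold signVec
  split_ifs with hx <;> simp [hx]

theorem measurable_signVec : Measurable (signVec : (Fin p → ℝ) → Fin p → ℝ) := by
  simp_rw [funext signVec_eq_inv_smul]
  exact continuous_euclNorm.measurable.inv.smul measurable_id

theorem euclNorm_mulVec {Γ : Matrix (Fin m) (Fin p) ℝ} (hΓ : Γᵀ * Γ = 1) (v : Fin p → ℝ) :
    euclNorm (Γ *ᵥ v) = euclNorm v := by
  have hdot : (Γ *ᵥ v) ⬝ᵥ (Γ *ᵥ v) = v ⬝ᵥ v := by
    rw [dotProduct_mulVec, vecMul_mulVec, hΓ, vecMul_one]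
  simpa only [euclNorm, dotProduct, sq] using congrArg Real.sqrt hdot

theorem signVec_mulVec {Γ : Matrix (Fin m) (Fin p) ℝ} (hΓ : Γᵀ * Γ = 1) (v : Fin p → ℝ) :
    signVec (Γ *ᵥ v) = Γ *ᵥ signVec v := by
  rw [signVec_eq_inv_smul, signVec_eq_inv_smul, euclNorm_mulVec hΓ, mulVec_smul]

theorem euclNorm_mul_of_sq_eq_one {ε : Fin p → ℝ} (hε : ∀ i, ε i ^ 2 = 1) (x : Fin p → ℝ) :
    euclNorm (ε * x) = euclNorm x := by
  simp only [euclNorm, Pi.mul_apply, mul_pow, hε, one_mul]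

theorem signVec_mul_of_sq_eq_one {ε : Fin p → ℝ} (hε : ∀ i, ε i ^ 2 = 1) (x : Fin p → ℝ) :
    signVec (ε * x) = ε * signVec x := by
  rw [signVec_eq_inv_smul, signVec_eq_inv_smul, euclNorm_mul_of_sq_eq_one hε, mul_smul_comm]

/-- The junk value `0 / 0 = 0` makes this hold at `x = 0` as well. -/
theorem signVec_apply_mul_self (x : Fin p → ℝ) (i : Fin p) :
    signVec x i * signVec x i = x i ^ 2 / ∑ j, x j ^ 2 := by
  have hsq : euclNorm x ^ 2 = ∑ j, x j ^ 2 :=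
    Real.sq_sqrt (Finset.sum_nonneg fun j _ => sq_nonneg (x j))
  rw [signVec_eq_inv_smul, ← hsq, Pi.smul_apply, smul_eq_mul]
  ring

theorem abs_signVec_apply_le_one (x : Fin p → ℝ) (i : Fin p) : |signVec x i| ≤ 1 := by
  rw [← sq_le_one_iff_abs_le_one, sq, signVec_apply_mul_self]
  exact div_le_one_of_le₀
    (Finset.single_le_sum (f := fun j => x j ^ 2) (fun j _ => sq_nonneg _) (Finset.mem_univ i))
    (Finset.sum_nonneg fun j _ => sq_nonneg _)

end SpatialSign

section GaussianSymmetry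

variable {ι : Type*} [Fintype ι]

noncomputable def MeasurableEquiv.piMulLeft₀ (ε : ι → ℝ) (hε : ∀ i, ε i ≠ 0) :
    (ι → ℝ) ≃ᵐ (ι → ℝ) :=
  MeasurableEquiv.piCongrRight fun i => MeasurableEquiv.mulLeft₀ (ε i) (hε i)

theorem measurePreserving_piMulLeft₀_gaussianReal (v : NNReal) {ε : ι → ℝ}
    (hε : ∀ i, ε i ^ 2 = 1) :
    MeasurePreserving (MeasurableEquiv.piMulLeft₀ ε fun i h => by simpa [h] using hε i)
      (Measure.pi fun _ => gaussianReal 0 v) (Measure.pi fun _ => gaussianReal 0 v) := by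
  refine measurePreserving_pi _ _ fun i => ?_
  change MeasurePreserving (ε i * ·) _ _
  refine ⟨measurable_const_mul (ε i), ?_⟩
  rw [gaussianReal_map_const_mul]
  congr 1
  · ring
  · ext; simp [hε i]

theorem integral_comp_mul_gaussianReal_pi (v : NNReal) {ε : ι → ℝ} (hε : ∀ i, ε i ^ 2 = 1)
    (F : (ι → ℝ) → ℝ) :
    ∫ z, F (ε * z) ∂(Measure.pi fun _ => gaussianReal 0 v) =
      ∫ z, F z ∂(Measure.pi fun _ => gaussianReal 0 v) :=
  (measurePreserving_piMulLeft₀_gaussianReal v hε).integral_comp' F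

end GaussianSymmetry

section Covariance

variable {m p : ℕ}

theorem integral_mul_signVec_mul_signVec_eq_zero (v : NNReal) (h : ℝ → ℝ) (d : Fin p → ℝ)
    {k l : Fin p} (hkl : k ≠ l) :
    ∫ z, h (euclNorm z) * (signVec (d * z) k * signVec (d * z) l)
      ∂(Measure.pi fun _ => gaussianReal 0 v) = 0 := by
  set F : (Fin p → ℝ) → ℝ := fun z => h (euclNorm z) * (signVec (d * z) k * signVec (d * z) l)
  set ε := Function.update (1 : Fin p → ℝ) k (-1)
  have hε : ∀ i, ε i ^ 2 = 1 := fun i => by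
    rcases eq_or_ne i k with rfl | hi <;> simp [ε, *]
  have hflip : ∀ z, F (ε * z) = -F z := fun z => by
    simp only [F, mul_left_comm d ε z, signVec_mul_of_sq_eq_one hε,
      euclNorm_mul_of_sq_eq_one hε, Pi.mul_apply, ε, Function.update_self,
      Function.update_of_ne hkl.symm, Pi.one_apply]
    ring
  have hsymm := integral_comp_mul_gaussianReal_pi v hε F
  simp only [hflip, integral_neg] at hsymm
  linarith

theorem of_integral_mul_signVec_mul_signVec (v : NNReal) (h : ℝ → ℝ) {lam : Fin p → ℝ}
    (hlam : ∀ i, 0 ≤ lam i) :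
    Matrix.of (fun k l => ∫ z, h (euclNorm z) *
        (signVec (diagonal (fun i => √(lam i)) *ᵥ z) k *
          signVec (diagonal (fun i => √(lam i)) *ᵥ z) l) ∂(Measure.pi fun _ => gaussianReal 0 v))
      = diagonal fun i => ∫ z, h (euclNorm z) * lam i * z i ^ 2 / ∑ j, lam j * z j ^ 2
          ∂(Measure.pi fun _ => gaussianReal 0 v) := by
  have hD : ∀ z, diagonal (fun i => √(lam i)) *ᵥ z = (fun i => √(lam i)) * z :=
    fun z => funext (mulVec_diagonal _ z)
  ext k l
  simp only [hD, of_apply]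
  rcases eq_or_ne k l with rfl | hkl
  · rw [diagonal_apply_eq]
    congr 1 with z
    simp only [signVec_apply_mul_self, Pi.mul_apply, mul_pow, Real.sq_sqrt (hlam _)]
    ring
  · rw [diagonal_apply_ne _ hkl]
    exact integral_mul_signVec_mul_signVec_eq_zero v h _ hkl

theorem of_integral_mul_mulVec_mul_mulVec {α : Type*} [MeasurableSpace α] {μ : Measure α}
    (Γ : Matrix (Fin m) (Fin p) ℝ) (f : α → ℝ) (w : α → Fin p → ℝ)
    (hw : ∀ k l, Integrable (fun a => f a * (w a k * w a l)) μ) :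
    Matrix.of (fun i j => ∫ a, f a * ((Γ *ᵥ w a) i * (Γ *ᵥ w a) j) ∂μ)
      = Γ * Matrix.of (fun k l => ∫ a, f a * (w a k * w a l) ∂μ) * Γᵀ := by
  ext i j
  have hexpand : ∀ a, f a * ((Γ *ᵥ w a) i * (Γ *ᵥ w a) j)
      = ∑ k, ∑ l, Γ i k * Γ j l * (f a * (w a k * w a l)) := fun a => by
    simp only [mulVec, dotProduct]
    rw [Finset.sum_mul_sum, Finset.mul_sum]
    exact Finset.sum_congr rfl fun k _ => by
      rw [Finset.mul_sum]
      exact Finset.sum_congr rfl fun l _ => by ring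
  have hint : ∀ k l, ∫ a, Γ i k * Γ j l * (f a * (w a k * w a l)) ∂μ
      = Γ i k * Γ j l * ∫ a, f a * (w a k * w a l) ∂μ := fun k l => integral_const_mul _ _
  simp only [of_apply, hexpand]
  rw [integral_finsetSum _ fun k _ => integrable_finsetSum _ fun l _ => (hw k l).const_mul _]
  simp only [integral_finsetSum _ fun l _ => (hw _ l).const_mul _, hint, mul_apply,
    transpose_apply, of_apply, Finset.sum_mul]
  rw [Finset.sum_comm]
  exact Finset.sum_congr rfl fun k _ => Finset.sum_congr rfl fun l _ => by ring

theorem integrable_mul_signVec_mul_signVec {α : Type*} [MeasurableSpace α] {μ : Measure α}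
    {f : α → ℝ} (hf : Integrable f μ) {w : α → Fin p → ℝ} (hw : Measurable w) (k l : Fin p) :
    Integrable (fun a => f a * (signVec (w a) k * signVec (w a) l)) μ := by
  refine hf.mul_bdd (c := 1) ?_ (ae_of_all _ fun a => ?_)
  · exact ((measurable_pi_apply k).comp (measurable_signVec.comp hw)).mul
      ((measurable_pi_apply l).comp (measurable_signVec.comp hw)) |>.aestronglyMeasurable
  · rw [Real.norm_eq_abs, abs_mul]
    exact mul_le_one₀ (abs_signVec_apply_le_one _ k) (abs_nonneg _)
      (abs_signVec_apply_le_one _ l)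

end Covariance

theorem stmt_1_general (p : ℕ)
    (ν : Measure (Fin p → ℝ))
    (hν : ν = Measure.pi fun _ => gaussianReal 0 1)
    (lam : Fin p → ℝ) (hlam : ∀ i, 0 < lam i)
    (Γ : Matrix (Fin p) (Fin p) ℝ) (hΓ : Γᵀ * Γ = 1)
    (g : ℝ → ℝ)
    (C : ℝ)
    (hgmeas : Measurable g) (hgnonneg : ∀ t, 0 ≤ g t) (hgbdd : ∀ t, g t ≤ C) :
    (Matrix.of fun i j =>
        ∫ z, (g (euclNorm z)) ^ 2 *
          (signVec (Γ.mulVec ((Matrix.diagonal fun k => Real.sqrt (lam k)).mulVec z)) i *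
           signVec (Γ.mulVec ((Matrix.diagonal fun k => Real.sqrt (lam k)).mulVec z)) j) ∂ν)
      = Γ * Matrix.diagonal (fun i =>
          ∫ z, (g (euclNorm z)) ^ 2 * lam i * (z i) ^ 2 / (∑ j, lam j * (z j) ^ 2) ∂ν) * Γᵀ := by
  subst hν
  have hg_sq : Integrable (fun z => g (euclNorm z) ^ 2)
      (Measure.pi fun _ : Fin p => gaussianReal 0 1) := by
    refine Integrable.of_bound (C := C ^ 2)
      ((hgmeas.comp continuous_euclNorm.measurable).pow_const 2).aestronglyMeasurable
      (ae_of_all _ fun z => ?_)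
    rw [Real.norm_eq_abs, abs_pow, abs_of_nonneg (hgnonneg _)]
    exact pow_le_pow_left₀ (hgnonneg _) (hgbdd _) 2
  have hD : Measurable fun z : Fin p → ℝ => diagonal (fun k => √(lam k)) *ᵥ z :=
    (continuous_const.matrix_mulVec continuous_id).measurable
  simp only [signVec_mulVec hΓ]
  rw [of_integral_mul_mulVec_mul_mulVec Γ _ (fun z => signVec (diagonal (fun k => √(lam k)) *ᵥ z))
    fun k l => integrable_mul_signVec_mul_signVec hg_sq hD k l]
  exact congrArg (Γ * · * Γᵀ) (of_integral_mul_signVec_mul_signVec 1 (g · ^ 2) fun i => (hlam i).le)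

/-- (Theorem 3.1) Under the Gaussian elliptical model, the covariance matrix of the
multivariate rank `X̃ = D̃(X) S(X − μ)` equals `Γ Λ_{D,S} Γᵀ`, where `Λ_{D,S}` is
diagonal with entries `λ_{D,S,i} = E[ g(‖z‖)² λᵢ zᵢ² / (∑ⱼ λⱼ zⱼ²) ]`:
`E[ D̃(X)² S(X−μ) S(X−μ)ᵀ ] = Γ Λ_{D,S} Γᵀ` entrywise. -/
theorem stmt_1 (p : ℕ)
    (ν : Measure (Fin p → ℝ))
    (hν : ν = Measure.pi fun _ => gaussianReal 0 1)
    (lam : Fin p → ℝ) (hlam : ∀ i, 0 < lam i)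
    (Γ : Matrix (Fin p) (Fin p) ℝ) (hΓ : Γᵀ * Γ = 1)
    (μ : Fin p → ℝ)
    (Dtil : (Fin p → ℝ) → ℝ) (g : ℝ → ℝ)
    (hDmeas : Measurable Dtil) (hDnonneg : ∀ x, 0 ≤ Dtil x)
    (C : ℝ) (hDbdd : ∀ x, Dtil x ≤ C)
    (hgmeas : Measurable g) (hgnonneg : ∀ t, 0 ≤ g t) (hgbdd : ∀ t, g t ≤ C)
    (hDg : ∀ u : Fin p → ℝ,
      Dtil (Γ.mulVec ((Matrix.diagonal fun i => Real.sqrt (lam i)).mulVec u) + μ)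
        = g (euclNorm u)) :
    (Matrix.of fun i j =>
        ∫ z, (g (euclNorm z)) ^ 2 *
          (signVec (Γ.mulVec ((Matrix.diagonal fun k => Real.sqrt (lam k)).mulVec z)) i *
           signVec (Γ.mulVec ((Matrix.diagonal fun k => Real.sqrt (lam k)).mulVec z)) j) ∂ν)
      = Γ * Matrix.diagonal (fun i =>
          ∫ z, (g (euclNorm z)) ^ 2 * lam i * (z i) ^ 2 / (∑ j, lam j * (z j) ^ 2) ∂ν) * Γᵀ :=
  stmt_1_general p ν hν lam hlam Γ hΓ g C hgmeas hgnonneg hgbdd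
end

section
/- Orthogonal equivariance of the depth covariance matrix: let F be a probability measure on ℝ^p, μ ∈ ℝ^p, P a p×p real orthogonal matrix, and let D̃, D̃′ : ℝ^p → [0,∞) be bounded measurable functions satisfying D̃′(P x) = D̃(x) for all x ∈ ℝ^p. Then ∫ D̃′(P x)² S(P x − P μ) S(P x − P μ)ᵀ dF(x) = P ( ∫ D̃(x)² S(x − μ) S(x − μ)ᵀ dF(x) ) Pᵀ; equivalently, the DCM of the pushforward of F under x ↦ P x, computed with htped D̃′ and center P μ, equals P times the DCM of F (with htped D̃ and center μ) times Pᵀ. -/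
open MeasureTheory Matrix

lemma euclNorm_eq_zero_iff {p : ℕ} (x : Fin p → ℝ) : euclNorm x = 0 ↔ x = 0 := by
  unfold euclNorm
  rw [Real.sqrt_eq_zero (Finset.sum_nonneg fun i _ => sq_nonneg _)]
  rw [Finset.sum_eq_zero_iff_of_nonneg (fun i _ => sq_nonneg _)]
  constructor
  · intro h; funext i; simpa using pow_eq_zero_iff (n := 2) (by norm_num) |>.mp (h i (Finset.mem_univ i))
  · intro h i _; simp [h]

lemma abs_apply_le_euclNorm {p : ℕ} (x : Fin p → ℝ) (i : Fin p) : |x i| ≤ euclNorm x := by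
  rw [← Real.sqrt_sq_eq_abs]
  exact Real.sqrt_le_sqrt (Finset.single_le_sum (f := fun j => x j ^ 2)
    (fun j _ => sq_nonneg _) (Finset.mem_univ i))

lemma abs_signVec_le {p : ℕ} (x : Fin p → ℝ) (i : Fin p) : |signVec x i| ≤ 1 := by
  unfold signVec
  split
  · simp
  · rename_i h
    have hpos : 0 < euclNorm x := by
      rcases (Real.sqrt_nonneg (∑ i, x i ^ 2)).lt_or_eq with h1 | h1
      · exact h1
      · exact absurd ((euclNorm_eq_zero_iff x).mp h1.symm) h
    have := abs_apply_le_euclNorm x i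
    rw [Pi.smul_apply, smul_eq_mul, abs_mul, abs_inv, abs_of_pos hpos]
    rw [inv_mul_le_iff₀ hpos]
    linarith

lemma euclNorm_mulVec_s4 {p : ℕ} (P : Matrix (Fin p) (Fin p) ℝ) (hP : Pᵀ * P = 1)
    (v : Fin p → ℝ) : euclNorm (P.mulVec v) = euclNorm v := by
  unfold euclNorm
  congr 1
  have h1 : ∀ w : Fin p → ℝ, ∑ i, w i ^ 2 = w ⬝ᵥ w := by
    intro w; simp [dotProduct, sq]
  rw [h1, h1]
  calc (P *ᵥ v) ⬝ᵥ (P *ᵥ v) = ((P *ᵥ v) ᵥ* P) ⬝ᵥ v := Matrix.dotProduct_mulVec _ _ _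
    _ = (Pᵀ *ᵥ (P *ᵥ v)) ⬝ᵥ v := by rw [Matrix.mulVec_transpose]
    _ = v ⬝ᵥ v := by rw [Matrix.mulVec_mulVec, hP, Matrix.one_mulVec]

lemma mulVec_inj {p : ℕ} (P : Matrix (Fin p) (Fin p) ℝ) (hP : Pᵀ * P = 1)
    {v : Fin p → ℝ} (h : P.mulVec v = 0) : v = 0 := by
  have : Pᵀ *ᵥ (P *ᵥ v) = 0 := by rw [h, Matrix.mulVec_zero]
  rwa [Matrix.mulVec_mulVec, hP, Matrix.one_mulVec] at this

lemma signVec_mulVec_s4 {p : ℕ} (P : Matrix (Fin p) (Fin p) ℝ) (hP : Pᵀ * P = 1)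
    (v : Fin p → ℝ) : signVec (P.mulVec v) = P.mulVec (signVec v) := by
  by_cases hv : v = 0
  · subst hv; simp [signVec, Matrix.mulVec_zero]
  · have h1 : P *ᵥ v ≠ 0 := fun h => hv (mulVec_inj P hP h)
    simp [signVec, hv, h1, euclNorm_mulVec_s4 P hP, Matrix.mulVec_smul]

lemma measurable_signVec_sub {p : ℕ} (μ : Fin p → ℝ) (i : Fin p) :
    Measurable fun x : Fin p → ℝ => signVec (x - μ) i := by
  have h0 : Measurable fun x : Fin p → ℝ => euclNorm (x - μ) := by
    unfold euclNorm
    exact (Finset.measurable_sum _ fun j _ =>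
      ((measurable_pi_apply j).sub measurable_const).pow_const 2).sqrt
  have : ∀ x : Fin p → ℝ, signVec (x - μ) i =
      if x ∈ ({μ} : Set (Fin p → ℝ)) then 0 else (euclNorm (x - μ))⁻¹ * (x i - μ i) := by
    intro x
    by_cases h : x = μ
    · simp [h, signVec]
    · have : x - μ ≠ 0 := sub_ne_zero.mpr h
      simp [signVec, this, h, Pi.sub_apply]
  simp_rw [this]
  exact Measurable.ite (measurableSet_singleton μ) measurable_const
    (h0.inv.mul ((measurable_pi_apply i).sub measurable_const))

/-- Orthogonal equivariance of the depth covariance matrix: if `D̃′(P x) = D̃(x)` for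
all `x`, then `∫ D̃′(Px)² S(Px − Pμ) S(Px − Pμ)ᵀ dF(x) = P (∫ D̃(x)² S(x−μ) S(x−μ)ᵀ dF(x)) Pᵀ`;
equivalently, the DCM of the pushforward of `F` under `x ↦ P x` (with htped `D̃′` and
center `P μ`) equals `P` times the DCM of `F` times `Pᵀ`. -/
theorem stmt_4 (p : ℕ) (F : Measure (Fin p → ℝ)) [IsProbabilityMeasure F]
    (μ : Fin p → ℝ) (P : Matrix (Fin p) (Fin p) ℝ) (hP : Pᵀ * P = 1)
    (Dtil Dtil' : (Fin p → ℝ) → ℝ)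
    (hDmeas : Measurable Dtil) (hD'meas : Measurable Dtil')
    (hDnonneg : ∀ x, 0 ≤ Dtil x) (hD'nonneg : ∀ x, 0 ≤ Dtil' x)
    (C : ℝ) (hDbdd : ∀ x, Dtil x ≤ C) (hD'bdd : ∀ x, Dtil' x ≤ C)
    (hDD' : ∀ x : Fin p → ℝ, Dtil' (P.mulVec x) = Dtil x) :
    (Matrix.of fun i j =>
        ∫ x, (Dtil' (P.mulVec x)) ^ 2 *
          (signVec (P.mulVec x - P.mulVec μ) i * signVec (P.mulVec x - P.mulVec μ) j) ∂F)
      = P * (Matrix.of fun i j =>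
          ∫ x, (Dtil x) ^ 2 * (signVec (x - μ) i * signVec (x - μ) j) ∂F) * Pᵀ ∧
    (Matrix.of fun i j =>
        ∫ y, (Dtil' y) ^ 2 *
          (signVec (y - P.mulVec μ) i * signVec (y - P.mulVec μ) j)
            ∂(Measure.map (fun x => P.mulVec x) F))
      = P * (Matrix.of fun i j =>
          ∫ x, (Dtil x) ^ 2 * (signVec (x - μ) i * signVec (x - μ) j) ∂F) * Pᵀ := by
  have hint : ∀ k l : Fin p,
      Integrable (fun x => Dtil x ^ 2 * (signVec (x - μ) k * signVec (x - μ) l)) F := by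
    intro k l
    have hm : Measurable fun x => Dtil x ^ 2 * (signVec (x - μ) k * signVec (x - μ) l) :=
      (hDmeas.pow_const 2).mul ((measurable_signVec_sub μ k).mul (measurable_signVec_sub μ l))
    refine (integrable_const (C ^ 2)).mono' hm.aestronglyMeasurable (ae_of_all _ fun x => ?_)
    rw [Real.norm_eq_abs, abs_mul, abs_of_nonneg (sq_nonneg (Dtil x)), abs_mul]
    calc Dtil x ^ 2 * (|signVec (x - μ) k| * |signVec (x - μ) l|)
        ≤ C ^ 2 * 1 := by
          apply mul_le_mul (pow_le_pow_left₀ (hDnonneg x) (hDbdd x) 2)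
          · exact mul_le_one₀ (abs_signVec_le _ k) (abs_nonneg _) (abs_signVec_le _ l)
          · positivity
          · positivity
      _ = C ^ 2 := mul_one _
  have hfirst : (Matrix.of fun i j =>
        ∫ x, (Dtil' (P.mulVec x)) ^ 2 *
          (signVec (P.mulVec x - P.mulVec μ) i * signVec (P.mulVec x - P.mulVec μ) j) ∂F)
      = P * (Matrix.of fun i j =>
          ∫ x, (Dtil x) ^ 2 * (signVec (x - μ) i * signVec (x - μ) j) ∂F) * Pᵀ := by
    ext i j
    simp only [Matrix.of_apply, Matrix.mul_apply, Matrix.transpose_apply]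
    have hpt : ∀ x : Fin p → ℝ,
        (Dtil' (P.mulVec x)) ^ 2 *
          (signVec (P.mulVec x - P.mulVec μ) i * signVec (P.mulVec x - P.mulVec μ) j)
        = ∑ k, ∑ l, P i k * P j l *
            (Dtil x ^ 2 * (signVec (x - μ) k * signVec (x - μ) l)) := by
      intro x
      rw [show P.mulVec x - P.mulVec μ = P.mulVec (x - μ) from (Matrix.mulVec_sub P x μ).symm,
        signVec_mulVec_s4 P hP, hDD']
      simp only [Matrix.mulVec, dotProduct]
      rw [Finset.sum_mul_sum]
      rw [Finset.mul_sum]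
      refine Finset.sum_congr rfl fun k _ => ?_
      rw [Finset.mul_sum]
      exact Finset.sum_congr rfl fun l _ => by ring
    calc (∫ x, (Dtil' (P.mulVec x)) ^ 2 *
          (signVec (P.mulVec x - P.mulVec μ) i * signVec (P.mulVec x - P.mulVec μ) j) ∂F)
        = ∫ x, ∑ k, ∑ l, P i k * P j l *
            (Dtil x ^ 2 * (signVec (x - μ) k * signVec (x - μ) l)) ∂F := by
          exact integral_congr_ae (ae_of_all _ hpt)
      _ = ∑ k, ∑ l, P i k * P j l *
            ∫ x, Dtil x ^ 2 * (signVec (x - μ) k * signVec (x - μ) l) ∂F := by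
          rw [integral_finset_sum _ fun k _ =>
            integrable_finset_sum _ fun l _ => (hint k l).const_mul _]
          refine Finset.sum_congr rfl fun k _ => ?_
          rw [integral_finset_sum _ fun l _ => (hint k l).const_mul _]
          exact Finset.sum_congr rfl fun l _ => integral_const_mul _ _
      _ = ∑ l, (∑ k, P i k *
            ∫ x, Dtil x ^ 2 * (signVec (x - μ) k * signVec (x - μ) l) ∂F) * P j l := by
          rw [Finset.sum_comm]
          refine Finset.sum_congr rfl fun l _ => ?_
          rw [Finset.sum_mul]
          exact Finset.sum_congr rfl fun k _ => by ring
  refine ⟨hfirst, ?_⟩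
  have hPmeas : Measurable fun x : Fin p → ℝ => P.mulVec x := by
    refine measurable_pi_lambda _ fun i => ?_
    simp only [Matrix.mulVec, dotProduct]
    exact Finset.measurable_sum _ fun j _ => (measurable_pi_apply j).const_mul _
  have h2 : (Matrix.of fun i j =>
        ∫ y, (Dtil' y) ^ 2 *
          (signVec (y - P.mulVec μ) i * signVec (y - P.mulVec μ) j)
            ∂(Measure.map (fun x => P.mulVec x) F))
      = (Matrix.of fun i j =>
        ∫ x, (Dtil' (P.mulVec x)) ^ 2 *
          (signVec (P.mulVec x - P.mulVec μ) i * signVec (P.mulVec x - P.mulVec μ) j) ∂F) := by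
    ext i j
    simp only [Matrix.of_apply]
    exact integral_map hPmeas.aemeasurable
      (((hD'meas.pow_const 2).mul
        ((measurable_signVec_sub (P.mulVec μ) i).mul
          (measurable_signVec_sub (P.mulVec μ) j))).aestronglyMeasurable)
  rw [h2, hfirst]
end

section
/- Boundedness of the eigenvector influence function of the DCM: under the Gaussian elliptical model, fix i ∈ {1,…,p} and assume λ_{D,S,k} ≠ λ_{D,S,i} for all k ≠ i. For x₀ ≠ μ set z₀ = Λ^{−1/2} Γᵀ (x₀ − μ) and define IF(x₀) = Σ_{k ≠ i} [ √(λᵢ λₖ) z₀ᵢ z₀ₖ / (λ_{D,S,i} − λ_{D,S,k}) ] · [ g(‖z₀‖)² / (z₀ᵀ Λ z₀) ] γₖ ∈ ℝ^p. Then sup_{x₀ ∈ ℝ^p, x₀ ≠ μ} ‖IF(x₀)‖ < ∞. -/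
open MeasureTheory ProbabilityTheory Matrix

lemma euclNorm_eq_norm {p : ℕ} (x : Fin p → ℝ) :
    euclNorm x = ‖(EuclideanSpace.equiv (Fin p) ℝ).symm x‖ := by
  rw [EuclideanSpace.norm_eq]
  simp [euclNorm, sq_abs]

/-- Boundedness of the eigenvector influence function of the DCM: under the Gaussian
elliptical model, with `z₀ = Λ^{−1/2} Γᵀ (x₀ − μ)` and
`IF(x₀) = ∑_{k ≠ i} [√(λᵢ λₖ) z₀ᵢ z₀ₖ / (λ_{D,S,i} − λ_{D,S,k})] ·
[g(‖z₀‖)² / (z₀ᵀ Λ z₀)] γₖ`, one has `sup_{x₀ ≠ μ} ‖IF(x₀)‖ < ∞`. -/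
theorem stmt_14 (p : ℕ)
    (ν : Measure (Fin p → ℝ))
    (hν : ν = Measure.pi fun _ => gaussianReal 0 1)
    (lam : Fin p → ℝ) (hlam : ∀ i, 0 < lam i)
    (Γ : Matrix (Fin p) (Fin p) ℝ) (hΓ : Γᵀ * Γ = 1)
    (μ : Fin p → ℝ)
    (g : ℝ → ℝ) (hgmeas : Measurable g) (hgnonneg : ∀ t, 0 ≤ g t)
    (C : ℝ) (hgbdd : ∀ t, g t ≤ C)
    (lamDS : Fin p → ℝ)
    (hlamDS : ∀ i, lamDS i =
      ∫ z, (g (euclNorm z)) ^ 2 * lam i * (z i) ^ 2 / (∑ j, lam j * (z j) ^ 2) ∂ν)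
    (i : Fin p) (hdist : ∀ k : Fin p, k ≠ i → lamDS k ≠ lamDS i) :
    ∃ B : ℝ, ∀ x₀ : Fin p → ℝ, x₀ ≠ μ →
      (let z₀ : Fin p → ℝ :=
        (Matrix.diagonal fun j => (Real.sqrt (lam j))⁻¹).mulVec (Γᵀ.mulVec (x₀ - μ));
      euclNorm (∑ k ∈ Finset.univ.erase i,
        (Real.sqrt (lam i * lam k) * z₀ i * z₀ k / (lamDS i - lamDS k) *
          ((g (euclNorm z₀)) ^ 2 / (∑ j, lam j * (z₀ j) ^ 2))) • (fun r => Γ r k))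
        ≤ B) := by
  classical
  have hC0 : 0 ≤ C := le_trans (hgnonneg 0) (hgbdd 0)
  -- column norms
  have hcol : ∀ k : Fin p, euclNorm (fun r => Γ r k) = 1 := by
    intro k
    have h : ∑ r, (Γ r k) ^ 2 = (Γᵀ * Γ) k k := by
      simp [Matrix.mul_apply, Matrix.transpose_apply, sq]
    rw [euclNorm, h, hΓ, Matrix.one_apply_eq, Real.sqrt_one]
  refine ⟨∑ k ∈ Finset.univ.erase i, C ^ 2 / (2 * |lamDS i - lamDS k|), ?_⟩
  intro x₀ hx₀
  intro z₀
  set S := ∑ j, lam j * (z₀ j) ^ 2 with hS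
  have hSnn : 0 ≤ S := Finset.sum_nonneg fun j _ => mul_nonneg (hlam j).le (sq_nonneg _)
  set G := (g (euclNorm z₀)) ^ 2 with hG
  have hGnn : 0 ≤ G := sq_nonneg _
  have hGle : G ≤ C ^ 2 := by
    have := hgbdd (euclNorm z₀)
    have := hgnonneg (euclNorm z₀)
    nlinarith
  -- coefficient bound
  have key : ∀ k ∈ Finset.univ.erase i,
      |Real.sqrt (lam i * lam k) * z₀ i * z₀ k / (lamDS i - lamDS k) * (G / S)|
        ≤ C ^ 2 / (2 * |lamDS i - lamDS k|) := by
    intro k hk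
    have hki : k ≠ i := (Finset.mem_erase.mp hk).1
    have hd : lamDS i - lamDS k ≠ 0 := sub_ne_zero.mpr (Ne.symm (hdist k hki))
    have hdpos : 0 < |lamDS i - lamDS k| := abs_pos.mpr hd
    set A := Real.sqrt (lam i * lam k) * z₀ i * z₀ k with hA
    -- 2 |A| ≤ S
    have h2A : 2 * |A| ≤ S := by
      have hab : 2 * (Real.sqrt (lam i) * |z₀ i|) * (Real.sqrt (lam k) * |z₀ k|)
          ≤ (Real.sqrt (lam i) * |z₀ i|) ^ 2 + (Real.sqrt (lam k) * |z₀ k|) ^ 2 :=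
        two_mul_le_add_sq _ _
      have hAeq : |A| = (Real.sqrt (lam i) * |z₀ i|) * (Real.sqrt (lam k) * |z₀ k|) := by
        rw [hA, abs_mul, abs_mul, Real.sqrt_mul (hlam i).le,
          abs_of_nonneg (by positivity : (0:ℝ) ≤ Real.sqrt (lam i) * Real.sqrt (lam k))]
        ring
      have hsq1 : (Real.sqrt (lam i) * |z₀ i|) ^ 2 = lam i * (z₀ i) ^ 2 := by
        rw [mul_pow, Real.sq_sqrt (hlam i).le, sq_abs]
      have hsq2 : (Real.sqrt (lam k) * |z₀ k|) ^ 2 = lam k * (z₀ k) ^ 2 := by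
        rw [mul_pow, Real.sq_sqrt (hlam k).le, sq_abs]
      have hsub : lam i * (z₀ i) ^ 2 + lam k * (z₀ k) ^ 2 ≤ S := by
        have : ∑ j ∈ ({i, k} : Finset (Fin p)), lam j * (z₀ j) ^ 2 ≤ S := by
          apply Finset.sum_le_sum_of_subset_of_nonneg (Finset.subset_univ _)
          intro j _ _; exact mul_nonneg (hlam j).le (sq_nonneg _)
        rwa [Finset.sum_pair (Ne.symm hki)] at this
      calc 2 * |A| = 2 * (Real.sqrt (lam i) * |z₀ i|) * (Real.sqrt (lam k) * |z₀ k|) := by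
            rw [hAeq]; ring
        _ ≤ (Real.sqrt (lam i) * |z₀ i|) ^ 2 + (Real.sqrt (lam k) * |z₀ k|) ^ 2 := hab
        _ = lam i * (z₀ i) ^ 2 + lam k * (z₀ k) ^ 2 := by rw [hsq1, hsq2]
        _ ≤ S := hsub
    have hAS : |A| / S ≤ 1 / 2 := by
      rcases hSnn.eq_or_lt with h0 | hpos
      · have : |A| = 0 := le_antisymm (by linarith [h2A, h0]) (abs_nonneg _)
        rw [← h0, this]; norm_num
      · rw [div_le_div_iff₀ hpos (by norm_num)]; linarith
    have habs : |A / (lamDS i - lamDS k) * (G / S)|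
        = (|A| / S) * (G / |lamDS i - lamDS k|) := by
      rw [abs_mul, abs_div, abs_of_nonneg (div_nonneg hGnn hSnn)]
      ring
    rw [habs]
    calc (|A| / S) * (G / |lamDS i - lamDS k|)
        ≤ (1 / 2) * (C ^ 2 / |lamDS i - lamDS k|) := by
          apply mul_le_mul hAS _ (div_nonneg hGnn hdpos.le) (by norm_num)
          exact div_le_div_of_nonneg_right hGle hdpos.le
      _ = C ^ 2 / (2 * |lamDS i - lamDS k|) := by
          ring
  -- norm of the sum
  set E := (EuclideanSpace.equiv (Fin p) ℝ).symm with hE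
  have hmap : (E : (Fin p → ℝ) →ₗ[ℝ] EuclideanSpace ℝ (Fin p)) = E.toLinearEquiv := rfl
  calc euclNorm (∑ k ∈ Finset.univ.erase i,
        (Real.sqrt (lam i * lam k) * z₀ i * z₀ k / (lamDS i - lamDS k) * (G / S))
          • (fun r => Γ r k))
      = ‖∑ k ∈ Finset.univ.erase i,
        (Real.sqrt (lam i * lam k) * z₀ i * z₀ k / (lamDS i - lamDS k) * (G / S))
          • E (fun r => Γ r k)‖ := by
        rw [euclNorm_eq_norm]
        rw [← hE, map_sum]
        simp only [_root_.map_smul]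
    _ ≤ ∑ k ∈ Finset.univ.erase i,
        ‖(Real.sqrt (lam i * lam k) * z₀ i * z₀ k / (lamDS i - lamDS k) * (G / S))
          • E (fun r => Γ r k)‖ := norm_sum_le _ _
    _ ≤ ∑ k ∈ Finset.univ.erase i, C ^ 2 / (2 * |lamDS i - lamDS k|) := by
        apply Finset.sum_le_sum
        intro k hk
        rw [norm_smul, Real.norm_eq_abs, ← euclNorm_eq_norm, hcol, mul_one]
        exact key k hk
end
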